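/- arXiv:2504.19319 — 6 statements merged into one kernel-verified Lean document; each statement's English description precedes it below -/
import Mathlib

section
/- Let p and q be probability density functions on ℝⁿ with finite second moments. Then the L¹ distance satisfies ‖p − q‖₁ ≥ ‖𝔼_p[x] − 𝔼_q[x]‖² / (8·max(𝔼_p[‖x‖²], 𝔼_q[‖x‖²])), where 𝔼_p[x] ∈ ℝⁿ is the mean vector of p and ‖x‖ is the Euclidean norm. -/
open MeasureTheory

/-- Lower bound on the L¹ distance between probability densities on ℝⁿ in terms of
the difference of their mean vectors and their second moments:
`‖p − q‖₁ ≥ ‖𝔼_p[x] − 𝔼_q[x]‖² / (8·max(𝔼_p[‖x‖²], 𝔼_q[‖x‖²]))`. -/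
theorem l1_ge_mean_diff_sq {n : ℕ} (p q : EuclideanSpace ℝ (Fin n) → ℝ)
    (hp0 : ∀ x, 0 ≤ p x) (hq0 : ∀ x, 0 ≤ q x)
    (hpi : Integrable p) (hqi : Integrable q)
    (hp1 : ∫ x, p x = 1) (hq1 : ∫ x, q x = 1)
    (hpm : Integrable (fun x => p x • x)) (hqm : Integrable (fun x => q x • x))
    (hp2 : Integrable (fun x => p x * ‖x‖ ^ 2))
    (hq2 : Integrable (fun x => q x * ‖x‖ ^ 2))
    (hpos : 0 < max (∫ x, p x * ‖x‖ ^ 2) (∫ x, q x * ‖x‖ ^ 2)) :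
    ‖(∫ x, p x • x) - (∫ x, q x • x)‖ ^ 2 /
        (8 * max (∫ x, p x * ‖x‖ ^ 2) (∫ x, q x * ‖x‖ ^ 2)) ≤
      ∫ x, |p x - q x| := by
  set M := max (∫ x, p x * ‖x‖ ^ 2) (∫ x, q x * ‖x‖ ^ 2) with hM
  set r := ‖(∫ x, p x • x) - (∫ x, q x • x)‖ with hr
  set δ := ∫ x, |p x - q x| with hδ
  have habs : Integrable (fun x => |p x - q x|) := (hpi.sub hqi).abs
  have hδ0 : 0 ≤ δ := integral_nonneg fun x => abs_nonneg _
  -- measurability helpers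
  have hmeas : AEStronglyMeasurable (fun x : EuclideanSpace ℝ (Fin n) => |p x - q x|)
      volume := (hpi.sub hqi).abs.aestronglyMeasurable
  -- integrability of |p-q| * ‖x‖
  have hint1 : Integrable (fun x : EuclideanSpace ℝ (Fin n) => |p x - q x| * ‖x‖) := by
    have := (hpm.sub hqm).norm
    refine this.congr (Filter.Eventually.of_forall fun x => ?_)
    show ‖p x • x - q x • x‖ = _
    rw [← sub_smul, norm_smul, Real.norm_eq_abs]
  -- integrability of |p-q| * ‖x‖^2
  have hint2 : Integrable (fun x : EuclideanSpace ℝ (Fin n) => |p x - q x| * ‖x‖ ^ 2) := by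
    refine Integrable.mono' (hp2.add hq2)
      (hmeas.mul ((continuous_norm.pow 2).aestronglyMeasurable))
      (Filter.Eventually.of_forall fun x => ?_)
    have h1 : |p x - q x| ≤ p x + q x := by
      rw [abs_sub_le_iff]; constructor <;> nlinarith [hp0 x, hq0 x]
    rw [Real.norm_eq_abs, abs_of_nonneg (mul_nonneg (abs_nonneg _) (sq_nonneg _))]
    simp only [Pi.add_apply]
    nlinarith [sq_nonneg ‖x‖, abs_nonneg (p x - q x)]
  -- step 1 : r ≤ ∫ |p-q| ‖x‖
  have hstep1 : r ≤ ∫ x, |p x - q x| * ‖x‖ := by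
    rw [hr, ← integral_sub hpm hqm]
    have : (fun x : EuclideanSpace ℝ (Fin n) => p x • x - q x • x)
        = fun x => (p x - q x) • x := by
      funext x; rw [sub_smul]
    rw [this]
    calc ‖∫ x, (p x - q x) • x‖ ≤ ∫ x, ‖(p x - q x) • x‖ :=
          norm_integral_le_integral_norm _
      _ = ∫ x, |p x - q x| * ‖x‖ := by
          congr 1; funext x; rw [norm_smul, Real.norm_eq_abs]
  -- step 3 : S ≤ 2 M
  have hS : ∫ x, |p x - q x| * ‖x‖ ^ 2 ≤ 2 * M := by
    have h1 : ∫ x, |p x - q x| * ‖x‖ ^ 2 ≤ ∫ x, (p x * ‖x‖ ^ 2 + q x * ‖x‖ ^ 2) := by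
      refine integral_mono hint2 (hp2.add hq2) fun x => ?_
      have h2 : |p x - q x| ≤ p x + q x := by
        rw [abs_sub_le_iff]
        constructor <;> nlinarith [hp0 x, hq0 x]
      simp only [Pi.add_apply] at *
      nlinarith [sq_nonneg ‖x‖]
    rw [integral_add hp2 hq2] at h1
    have : (∫ x, p x * ‖x‖ ^ 2) ≤ M := le_max_left _ _
    have : (∫ x, q x * ‖x‖ ^ 2) ≤ M := le_max_right _ _
    linarith
  -- handle r = 0
  have hr0 : (0:ℝ) ≤ r := hr ▸ norm_nonneg _
  rcases eq_or_lt_of_le hr0 with h0 | hrpos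
  · rw [← h0]
    simpa using hδ0
  -- main case
  set t := 4 * M / r with ht
  have htpos : 0 < t := div_pos (by positivity) hrpos
  have htr : t * r = 4 * M := by rw [ht, div_mul_cancel₀ _ hrpos.ne']
  -- weighted AM-GM integrated
  have hkey : 2 * t * (∫ x, |p x - q x| * ‖x‖) ≤ t ^ 2 * δ + ∫ x, |p x - q x| * ‖x‖ ^ 2 := by
    have h1 : ∫ x, 2 * t * (|p x - q x| * ‖x‖) ≤
        ∫ x, (t ^ 2 * |p x - q x| + |p x - q x| * ‖x‖ ^ 2) := by
      refine integral_mono (hint1.const_mul _) ((habs.const_mul _).add hint2) fun x => ?_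
      nlinarith [mul_nonneg (abs_nonneg (p x - q x)) (sq_nonneg (t - ‖x‖))]
    rw [MeasureTheory.integral_const_mul, integral_add (habs.const_mul _) hint2, MeasureTheory.integral_const_mul] at h1
    exact h1
  have hA : 2 * t * r ≤ 2 * t * (∫ x, |p x - q x| * ‖x‖) := by
    apply mul_le_mul_of_nonneg_left hstep1 (by positivity)
  have hMpos : 0 < M := hpos
  rw [div_le_iff₀ (by positivity)]
  nlinarith [mul_le_mul_of_nonneg_right hkey (le_of_lt hrpos),
    mul_le_mul_of_nonneg_right hA (le_of_lt hrpos), sq_nonneg r, htr,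
    mul_le_mul_of_nonneg_right hS (sq_nonneg r), mul_pos hMpos hrpos]
end

section
/- Let p and q be probability density functions on ℝ with finite fourth moments. Then ‖p − q‖₁ ≥ |𝔼_p[x²] − 𝔼_q[x²]|² / (4·max(𝔼_p[x⁴], 𝔼_q[x⁴])). -/
open MeasureTheory

/-- Lower bound on the L¹ distance between probability densities on ℝ in terms of
the difference of their second moments and their fourth moments:
`‖p − q‖₁ ≥ |𝔼_p[x²] − 𝔼_q[x²]|² / (4·max(𝔼_p[x⁴], 𝔼_q[x⁴]))`. -/
theorem l1_ge_second_moment_diff_sq (p q : ℝ → ℝ)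
    (hp0 : ∀ x, 0 ≤ p x) (hq0 : ∀ x, 0 ≤ q x)
    (hpi : Integrable p) (hqi : Integrable q)
    (hp1 : ∫ x, p x = 1) (hq1 : ∫ x, q x = 1)
    (hp2 : Integrable (fun x => p x * x ^ 2)) (hq2 : Integrable (fun x => q x * x ^ 2))
    (hp4 : Integrable (fun x => p x * x ^ 4)) (hq4 : Integrable (fun x => q x * x ^ 4))
    (hpos : 0 < max (∫ x, p x * x ^ 4) (∫ x, q x * x ^ 4)) :
    |(∫ x, p x * x ^ 2) - ∫ x, q x * x ^ 2| ^ 2 /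
        (4 * max (∫ x, p x * x ^ 4) (∫ x, q x * x ^ 4)) ≤
      ∫ x, |p x - q x| := by
  set M := max (∫ x, p x * x ^ 4) (∫ x, q x * x ^ 4) with hM
  set L := ∫ x, |p x - q x| with hL
  -- integrability facts
  have h1 : Integrable (fun x => |p x - q x|) := (hpi.sub hqi).abs
  have h2 : Integrable (fun x => |p x - q x| * x ^ 2) := by
    have := (hp2.sub hq2).abs
    refine this.congr (by
      filter_upwards with x
      simp only [Pi.sub_apply]
      rw [← sub_mul, abs_mul, abs_of_nonneg (sq_nonneg x)])
  have h4 : Integrable (fun x => |p x - q x| * x ^ 4) := by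
    have := (hp4.sub hq4).abs
    refine this.congr (by
      filter_upwards with x
      simp only [Pi.sub_apply]
      rw [← sub_mul, abs_mul, abs_of_nonneg (by positivity : (0:ℝ) ≤ x ^ 4)])
  have hmeas : AEStronglyMeasurable (fun x => Real.sqrt |p x - q x|) volume :=
    Real.continuous_sqrt.comp_aestronglyMeasurable (hpi.sub hqi).aestronglyMeasurable.norm
  have hmeas2 : AEStronglyMeasurable (fun x => Real.sqrt |p x - q x| * x ^ 2) volume :=
    hmeas.mul ((continuous_pow 2).aestronglyMeasurable)
  have hf : MemLp (fun x => Real.sqrt |p x - q x|) 2 volume := by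
    rw [memLp_two_iff_integrable_sq hmeas]
    exact h1.congr (by filter_upwards with x; rw [Real.sq_sqrt (abs_nonneg _)])
  have hg : MemLp (fun x => Real.sqrt |p x - q x| * x ^ 2) 2 volume := by
    rw [memLp_two_iff_integrable_sq hmeas2]
    refine h4.congr ?_
    filter_upwards with x
    rw [mul_pow, Real.sq_sqrt (abs_nonneg _), ← pow_mul]
  have conj : Real.HolderConjugate 2 2 := by
    constructor <;> norm_num
  have CS := integral_mul_le_Lp_mul_Lq_of_nonneg (μ := volume) conj
      (f := fun x => Real.sqrt |p x - q x|) (g := fun x => Real.sqrt |p x - q x| * x ^ 2)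
      (Filter.Eventually.of_forall fun x => Real.sqrt_nonneg _)
      (Filter.Eventually.of_forall fun x => by positivity)
      (by simpa using hf) (by simpa using hg)
  -- rewrite CS
  have e1 : (∫ x, Real.sqrt |p x - q x| * (Real.sqrt |p x - q x| * x ^ 2))
      = ∫ x, |p x - q x| * x ^ 2 := by
    congr 1; funext x
    rw [← mul_assoc, Real.mul_self_sqrt (abs_nonneg _)]
  have e2 : (∫ x, Real.sqrt |p x - q x| ^ (2:ℝ)) = L := by
    rw [hL]; congr 1; funext x
    rw [show ((2:ℝ)) = ((2:ℕ):ℝ) by norm_num, Real.rpow_natCast,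
      Real.sq_sqrt (abs_nonneg _)]
  have e3 : (∫ x, (Real.sqrt |p x - q x| * x ^ 2) ^ (2:ℝ)) = ∫ x, |p x - q x| * x ^ 4 := by
    congr 1; funext x
    rw [show ((2:ℝ)) = ((2:ℕ):ℝ) by norm_num, Real.rpow_natCast,
      mul_pow, Real.sq_sqrt (abs_nonneg _), ← pow_mul]
  rw [e1, e2, e3] at CS
  -- bound on the fourth moment part
  have hK : (∫ x, |p x - q x| * x ^ 4) ≤ 2 * M := by
    have : (∫ x, |p x - q x| * x ^ 4) ≤ ∫ x, p x * x ^ 4 + q x * x ^ 4 := by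
      refine integral_mono h4 (hp4.add hq4) fun x => ?_
      have habs : |p x - q x| ≤ p x + q x := by
        calc |p x - q x| ≤ |p x| + |q x| := abs_sub _ _
          _ = p x + q x := by rw [abs_of_nonneg (hp0 x), abs_of_nonneg (hq0 x)]
      have hx4 : (0:ℝ) ≤ x ^ 4 := by positivity
      calc |p x - q x| * x ^ 4 ≤ (p x + q x) * x ^ 4 := mul_le_mul_of_nonneg_right habs hx4
        _ = p x * x ^ 4 + q x * x ^ 4 := by ring
    rw [integral_add hp4 hq4] at this
    have h1' : (∫ x, p x * x ^ 4) ≤ M := le_max_left _ _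
    have h2' : (∫ x, q x * x ^ 4) ≤ M := le_max_right _ _
    linarith
  -- |Δ| ≤ ∫ |p−q| x²
  have hΔ : |(∫ x, p x * x ^ 2) - ∫ x, q x * x ^ 2| ≤ ∫ x, |p x - q x| * x ^ 2 := by
    rw [← integral_sub hp2 hq2]
    calc |∫ x, p x * x ^ 2 - q x * x ^ 2| ≤ ∫ x, |p x * x ^ 2 - q x * x ^ 2| :=
          (by simpa [Real.norm_eq_abs] using
            norm_integral_le_integral_norm (fun x => p x * x ^ 2 - q x * x ^ 2))
      _ = ∫ x, |p x - q x| * x ^ 2 := by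
          congr 1; funext x
          rw [← sub_mul, abs_mul, abs_of_nonneg (sq_nonneg x)]
  have hL0 : 0 ≤ L := integral_nonneg fun x => abs_nonneg _
  have hK0 : 0 ≤ ∫ x, |p x - q x| * x ^ 4 :=
    integral_nonneg fun x => by positivity
  -- combine
  have key : |(∫ x, p x * x ^ 2) - ∫ x, q x * x ^ 2| ^ 2 ≤ L * (2 * M) := by
    have h25 : (∫ x, |p x - q x| * x ^ 2) ≤ L ^ ((1:ℝ)/2) * (∫ x, |p x - q x| * x ^ 4) ^ ((1:ℝ)/2) := CS
    have sq_bound : (∫ x, |p x - q x| * x ^ 2) ^ 2 ≤ L * (∫ x, |p x - q x| * x ^ 4) := by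
      have hrhs : (L ^ ((1:ℝ)/2) * (∫ x, |p x - q x| * x ^ 4) ^ ((1:ℝ)/2)) ^ 2
          = L * (∫ x, |p x - q x| * x ^ 4) := by
        rw [mul_pow, ← Real.rpow_natCast (L ^ ((1:ℝ)/2)) 2, ← Real.rpow_natCast ((∫ x, |p x - q x| * x ^ 4) ^ ((1:ℝ)/2)) 2,
          ← Real.rpow_mul hL0, ← Real.rpow_mul hK0]
        norm_num
      have h0 : 0 ≤ ∫ x, |p x - q x| * x ^ 2 := integral_nonneg fun x => by positivity
      calc (∫ x, |p x - q x| * x ^ 2) ^ 2 ≤ (L ^ ((1:ℝ)/2) * (∫ x, |p x - q x| * x ^ 4) ^ ((1:ℝ)/2)) ^ 2 :=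
            pow_le_pow_left₀ h0 h25 2
        _ = L * (∫ x, |p x - q x| * x ^ 4) := hrhs
    calc |(∫ x, p x * x ^ 2) - ∫ x, q x * x ^ 2| ^ 2 ≤ (∫ x, |p x - q x| * x ^ 2) ^ 2 :=
          pow_le_pow_left₀ (abs_nonneg _) hΔ 2
      _ ≤ L * (∫ x, |p x - q x| * x ^ 4) := sq_bound
      _ ≤ L * (2 * M) := by nlinarith
  rw [div_le_iff₀ (by positivity)]
  nlinarith
end

section
/- Let p and q be probability density functions on ℝ with finite second moments. Then for every x̄ > 0, ‖p − q‖₁ ≥ (1/x̄)·|𝔼_p[x] − 𝔼_q[x]| − (2/x̄²)·max(𝔼_p[x²], 𝔼_q[x²]). -/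
/-!
Truncating the identity at level `x̄` gives a test function bounded by `x̄`, so the truncated
first moments of `p` and `q` differ by at most `x̄ ‖p − q‖₁`. On the tail `|x| > x̄` we have
`|x| ≤ x² / x̄`, so truncation moves each first moment by at most its second moment over `x̄`.
Dividing the resulting bound `|𝔼_p[x] − 𝔼_q[x]| ≤ x̄ ‖p − q‖₁ + 2 max(𝔼_p[x²], 𝔼_q[x²]) / x̄`
by `x̄` gives the claim.
-/

open MeasureTheory

noncomputable def truncatedId (c x : ℝ) : ℝ := if |x| ≤ c then x else 0

namespace truncatedId

variable {c : ℝ}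

lemma measurable (c : ℝ) : Measurable (truncatedId c) :=
  Measurable.ite (measurableSet_le measurable_abs measurable_const) measurable_id measurable_const

lemma abs_le (hc : 0 ≤ c) (x : ℝ) : |truncatedId c x| ≤ c := by
  unfold truncatedId
  split_ifs with h
  · exact h
  · simpa using hc

lemma abs_sub_le_sq_div (hc : 0 < c) (x : ℝ) : |x - truncatedId c x| ≤ x ^ 2 / c := by
  unfold truncatedId
  split_ifs with h
  · rw [sub_self, abs_zero]
    positivity
  · rw [sub_zero, le_div_iff₀ hc, ← sq_abs x, sq]
    exact mul_le_mul_of_nonneg_left (not_le.mp h).le (abs_nonneg x)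

end truncatedId

variable {μ : Measure ℝ}

lemma integrable_mul_truncatedId {r : ℝ → ℝ} (hr : Integrable r μ) {c : ℝ} (hc : 0 ≤ c) :
    Integrable (fun x => r x * truncatedId c x) μ :=
  hr.mul_bdd (truncatedId.measurable c).aestronglyMeasurable
    (ae_of_all _ fun x => truncatedId.abs_le hc x)

lemma abs_integral_mul_sub_integral_mul_truncatedId_le {r : ℝ → ℝ} (hr0 : ∀ x, 0 ≤ r x)
    (hr : Integrable r μ) (hr1 : Integrable (fun x => r x * x) μ)
    (hr2 : Integrable (fun x => r x * x ^ 2) μ) {c : ℝ} (hc : 0 < c) :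
    |(∫ x, r x * x ∂μ) - ∫ x, r x * truncatedId c x ∂μ| ≤ (∫ x, r x * x ^ 2 ∂μ) / c := by
  rw [← integral_sub hr1 (integrable_mul_truncatedId hr hc.le), ← integral_div]
  refine norm_integral_le_of_norm_le (G := ℝ) (hr2.div_const c) (ae_of_all _ fun x => ?_)
  rw [Real.norm_eq_abs, ← mul_sub, abs_mul, abs_of_nonneg (hr0 x), mul_div_assoc]
  exact mul_le_mul_of_nonneg_left (truncatedId.abs_sub_le_sq_div hc x) (hr0 x)

lemma abs_integral_mul_truncatedId_sub_le {p q : ℝ → ℝ} (hp : Integrable p μ)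
    (hq : Integrable q μ) {c : ℝ} (hc : 0 ≤ c) :
    |(∫ x, p x * truncatedId c x ∂μ) - ∫ x, q x * truncatedId c x ∂μ| ≤
      c * ∫ x, |p x - q x| ∂μ := by
  rw [← integral_sub (integrable_mul_truncatedId hp hc) (integrable_mul_truncatedId hq hc),
    ← integral_const_mul]
  refine norm_integral_le_of_norm_le (G := ℝ) ((hp.sub hq).abs.const_mul c)
    (ae_of_all _ fun x => ?_)
  rw [Real.norm_eq_abs, ← sub_mul, abs_mul, mul_comm c]
  exact mul_le_mul_of_nonneg_left (truncatedId.abs_le hc x) (abs_nonneg _)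

theorem l1_ge_first_moment_truncated_general (p q : ℝ → ℝ)
    (hp0 : ∀ x, 0 ≤ p x) (hq0 : ∀ x, 0 ≤ q x)
    (hpi : Integrable p) (hqi : Integrable q)
    (hpm : Integrable (fun x => p x * x)) (hqm : Integrable (fun x => q x * x))
    (hp2 : Integrable (fun x => p x * x ^ 2))
    (hq2 : Integrable (fun x => q x * x ^ 2)) :
    ∀ xb : ℝ, 0 < xb →
      (1 / xb) * |(∫ x, p x * x) - ∫ x, q x * x| -
          (2 / xb ^ 2) * max (∫ x, p x * x ^ 2) (∫ x, q x * x ^ 2) ≤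
        ∫ x, |p x - q x| := by
  intro xb hxb
  have tail_p := abs_integral_mul_sub_integral_mul_truncatedId_le hp0 hpi hpm hp2 hxb
  have tail_q := abs_integral_mul_sub_integral_mul_truncatedId_le hq0 hqi hqm hq2 hxb
  have body := abs_integral_mul_truncatedId_sub_le hpi hqi hxb.le
  set M := max (∫ x, p x * x ^ 2) (∫ x, q x * x ^ 2)
  have first_moment_gap :
      |(∫ x, p x * x) - ∫ x, q x * x| ≤ xb * (∫ x, |p x - q x|) + 2 * (M / xb) := by
    have hMp : (∫ x, p x * x ^ 2) / xb ≤ M / xb := by gcongr; exact le_max_left _ _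
    have hMq : (∫ x, q x * x ^ 2) / xb ≤ M / xb := by gcongr; exact le_max_right _ _
    have triangle_p := abs_sub_le (∫ x, p x * x) (∫ x, p x * truncatedId xb x) (∫ x, q x * x)
    have triangle_q := abs_sub_le (∫ x, p x * truncatedId xb x) (∫ x, q x * truncatedId xb x)
      (∫ x, q x * x)
    rw [abs_sub_comm] at tail_q
    linarith
  rw [sub_le_iff_le_add, one_div_mul_eq_div, div_le_iff₀ hxb]
  exact first_moment_gap.trans_eq (by field_simp)

/-- Pre-optimization total-variation lower bound: for probability densities `p`, `q`
on ℝ with finite second moments and every `x̄ > 0`,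
`‖p − q‖₁ ≥ (1/x̄)·|𝔼_p[x] − 𝔼_q[x]| − (2/x̄²)·max(𝔼_p[x²], 𝔼_q[x²])`. -/
theorem l1_ge_first_moment_truncated (p q : ℝ → ℝ)
    (hp0 : ∀ x, 0 ≤ p x) (hq0 : ∀ x, 0 ≤ q x)
    (hpi : Integrable p) (hqi : Integrable q)
    (hp1 : ∫ x, p x = 1) (hq1 : ∫ x, q x = 1)
    (hpm : Integrable (fun x => p x * x)) (hqm : Integrable (fun x => q x * x))
    (hp2 : Integrable (fun x => p x * x ^ 2))
    (hq2 : Integrable (fun x => q x * x ^ 2)) :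
    ∀ xb : ℝ, 0 < xb →
      (1 / xb) * |(∫ x, p x * x) - ∫ x, q x * x| -
          (2 / xb ^ 2) * max (∫ x, p x * x ^ 2) (∫ x, q x * x ^ 2) ≤
        ∫ x, |p x - q x| :=
  l1_ge_first_moment_truncated_general p q hp0 hq0 hpi hqi hpm hqm hp2 hq2
end

section
/- Let p and q be probability densities on ℝⁿ with finite fourth moments and let V(p), V(q) denote their covariance matrices. Then ‖p − q‖₁ ≥ ‖V(p) − V(q)‖_op² / (72·max(𝔼_p[‖x‖⁴], 𝔼_q[‖x‖⁴])). -/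
open MeasureTheory Real
set_option maxHeartbeats 1000000

/-- The operator (spectral) norm of a real square matrix, as the norm of the
associated operator on Euclidean space. -/
noncomputable def matrixOpNorm {n : ℕ} (M : Matrix (Fin n) (Fin n) ℝ) : ℝ :=
  ‖Matrix.toEuclideanCLM (𝕜 := ℝ) M‖

/-- The covariance matrix of a probability density `p` on ℝⁿ:
`V(p) = 𝔼_p[x xᵀ] − 𝔼_p[x] 𝔼_p[x]ᵀ`. -/
noncomputable def covMatrix {n : ℕ} (p : EuclideanSpace ℝ (Fin n) → ℝ) :
    Matrix (Fin n) (Fin n) ℝ :=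
  Matrix.of fun i j =>
    (∫ x, p x * (x i * x j)) - (∫ x, p x • x) i * (∫ x, p x • x) j

lemma cs_int {α : Type*} [MeasurableSpace α] {μ : Measure α} {f g : α → ℝ}
    (hf0 : ∀ x, 0 ≤ f x) (hfi : Integrable f μ) (hg : AEStronglyMeasurable g μ)
    (hfg2 : Integrable (fun x => f x * g x ^ 2) μ) :
    ∫ x, f x * |g x| ∂μ ≤ Real.sqrt (∫ x, f x ∂μ) * Real.sqrt (∫ x, f x * g x ^ 2 ∂μ) := by
  have h2 : (2:ℝ).HolderConjugate 2 := Real.HolderConjugate.two_two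
  set F : α → ℝ := fun x => Real.sqrt (f x) with hF
  set G : α → ℝ := fun x => Real.sqrt (f x) * |g x| with hG
  have hFm : AEStronglyMeasurable F μ :=
    Real.continuous_sqrt.comp_aestronglyMeasurable hfi.aestronglyMeasurable
  have hGm : AEStronglyMeasurable G μ := hFm.mul (continuous_abs.comp_aestronglyMeasurable hg)
  have hFsq : ∀ x, F x ^ 2 = f x := fun x => Real.sq_sqrt (hf0 x)
  have hGsq : ∀ x, G x ^ 2 = f x * g x ^ 2 := by
    intro x; simp only [hG, mul_pow, Real.sq_sqrt (hf0 x), sq_abs]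
  have hFL : MemLp F (ENNReal.ofReal 2) μ := by
    rw [show ENNReal.ofReal 2 = 2 by norm_num]
    exact (memLp_two_iff_integrable_sq hFm).2 (hfi.congr (by filter_upwards with x using (hFsq x).symm))
  have hGL : MemLp G (ENNReal.ofReal 2) μ := by
    rw [show ENNReal.ofReal 2 = 2 by norm_num]
    exact (memLp_two_iff_integrable_sq hGm).2
      (hfg2.congr (by filter_upwards with x using (hGsq x).symm))
  have key : ∫ a, F a * G a ∂μ ≤ (∫ a, F a ^ (2:ℝ) ∂μ) ^ (1/(2:ℝ)) * (∫ a, G a ^ (2:ℝ) ∂μ) ^ (1/(2:ℝ)) :=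
    integral_mul_le_Lp_mul_Lq_of_nonneg h2
    (Filter.Eventually.of_forall fun x => Real.sqrt_nonneg _)
    (Filter.Eventually.of_forall fun x => mul_nonneg (Real.sqrt_nonneg _) (abs_nonneg _))
    hFL hGL
  have e1 : ∀ x, F x * G x = f x * |g x| := fun x => by
    rw [hF, hG, ← mul_assoc, Real.mul_self_sqrt (hf0 x)]
  have e2 : ∀ x, F x ^ (2:ℝ) = f x := fun x => by
    rw [show (2:ℝ) = ((2:ℕ):ℝ) by norm_num, Real.rpow_natCast, hFsq]
  have e3 : ∀ x, G x ^ (2:ℝ) = f x * g x ^ 2 := fun x => by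
    rw [show (2:ℝ) = ((2:ℕ):ℝ) by norm_num, Real.rpow_natCast, hGsq]
  simp only [e1, e2, e3] at key
  calc ∫ x, f x * |g x| ∂μ ≤ (∫ x, f x ∂μ) ^ (1/(2:ℝ)) * (∫ x, f x * g x ^ 2 ∂μ) ^ (1/(2:ℝ)) := key
    _ = _ := by rw [Real.sqrt_eq_rpow, Real.sqrt_eq_rpow]

lemma opNorm_le_of_quadform {n : ℕ} (M : Matrix (Fin n) (Fin n) ℝ) {C : ℝ} (hC : 0 ≤ C)
    (h : ∀ w v : EuclideanSpace ℝ (Fin n),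
      |∑ i, ∑ j, w i * (M i j * v j)| ≤ C * ‖w‖ * ‖v‖) :
    matrixOpNorm M ≤ C := by
  apply ContinuousLinearMap.opNorm_le_bound _ hC
  intro v
  set T := Matrix.toEuclideanCLM (𝕜 := ℝ) M
  have key : ∀ i, (T v) i = ∑ j, M i j * v j := fun i => rfl
  have h1 : ‖T v‖ ^ 2 = ∑ i, ∑ j, (T v) i * (M i j * v j) := by
    rw [← real_inner_self_eq_norm_sq]
    simp only [PiLp.inner_apply, RCLike.inner_apply, conj_trivial, key, Finset.mul_sum]
  have h2 := h (T v) v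
  rw [← h1] at h2
  rcases eq_or_lt_of_le (norm_nonneg (T v)) with h0 | h0
  · rw [← h0]; positivity
  · nlinarith [norm_nonneg v, abs_nonneg (‖T v‖^2), le_abs_self (‖T v‖^2)]

lemma inner_eq_sum {n : ℕ} (w x : EuclideanSpace ℝ (Fin n)) :
    (inner ℝ w x : ℝ) = ∑ i, w i * x i := by
  simp [PiLp.inner_apply, RCLike.inner_apply, conj_trivial, mul_comm]

lemma quadform_eq {n : ℕ} (p : EuclideanSpace ℝ (Fin n) → ℝ)
    (hpij : ∀ i j, Integrable (fun x => p x * (x i * x j)))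
    (w v : EuclideanSpace ℝ (Fin n)) :
    ∑ i, ∑ j, w i * (covMatrix p i j * v j)
      = (∫ x, p x * (inner ℝ w x * inner ℝ v x : ℝ))
        - (inner ℝ w (∫ x, p x • x) : ℝ) * (inner ℝ v (∫ x, p x • x) : ℝ) := by
  set m : EuclideanSpace ℝ (Fin n) := ∫ x, p x • x with hm
  have hcov : ∀ i j, covMatrix p i j
      = (∫ x, p x * (x i * x j)) - m i * m j := fun i j => rfl
  have split : ∀ i j, w i * (covMatrix p i j * v j)
      = w i * ((∫ x, p x * (x i * x j)) * v j)
        - w i * ((m i * m j) * v j) := by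
    intro i j; rw [hcov]; ring
  simp only [split, Finset.sum_sub_distrib]
  congr 1
  · -- second-moment part
    have ptw : ∀ x : EuclideanSpace ℝ (Fin n),
        p x * (inner ℝ w x * inner ℝ v x : ℝ)
          = ∑ i, ∑ j, w i * (p x * (x i * x j) * v j) := by
      intro x
      rw [inner_eq_sum w x, inner_eq_sum v x, Finset.sum_mul_sum, Finset.mul_sum]
      apply Finset.sum_congr rfl; intro i _
      rw [Finset.mul_sum]
      apply Finset.sum_congr rfl; intro j _
      ring
    have step : (∫ x, p x * (inner ℝ w x * inner ℝ v x : ℝ))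
        = ∑ i, ∑ j, ∫ x, w i * (p x * (x i * x j) * v j) := by
      rw [integral_congr_ae (Filter.Eventually.of_forall ptw), integral_finset_sum]
      · refine Finset.sum_congr rfl fun i _ => ?_
        rw [integral_finset_sum]
        exact fun j _ => (((hpij i j).mul_const _).const_mul _)
      · exact fun i _ => integrable_finset_sum _ fun j _ => (((hpij i j).mul_const _).const_mul _)
    rw [step]
    apply Finset.sum_congr rfl; intro i _
    apply Finset.sum_congr rfl; intro j _
    rw [integral_const_mul, integral_mul_const]
  · -- mean part
    rw [inner_eq_sum w m, inner_eq_sum v m, Finset.sum_mul_sum]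
    apply Finset.sum_congr rfl; intro i _
    apply Finset.sum_congr rfl; intro j _
    ring

/-- Lower bound on the L¹ distance between probability densities on ℝⁿ in terms of
the operator-norm distance of their covariance matrices and their fourth moments:
`‖p − q‖₁ ≥ ‖V(p) − V(q)‖_op² / (72·max(𝔼_p[‖x‖⁴], 𝔼_q[‖x‖⁴]))`. -/
theorem l1_ge_cov_diff_sq {n : ℕ} (p q : EuclideanSpace ℝ (Fin n) → ℝ)
    (hp0 : ∀ x, 0 ≤ p x) (hq0 : ∀ x, 0 ≤ q x)
    (hpi : Integrable p) (hqi : Integrable q)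
    (hp1 : ∫ x, p x = 1) (hq1 : ∫ x, q x = 1)
    (hpm : Integrable (fun x => p x • x)) (hqm : Integrable (fun x => q x • x))
    (hpij : ∀ i j, Integrable (fun x => p x * (x i * x j)))
    (hqij : ∀ i j, Integrable (fun x => q x * (x i * x j)))
    (hp4 : Integrable (fun x => p x * ‖x‖ ^ 4))
    (hq4 : Integrable (fun x => q x * ‖x‖ ^ 4))
    (hpos : 0 < max (∫ x, p x * ‖x‖ ^ 4) (∫ x, q x * ‖x‖ ^ 4)) :
    matrixOpNorm (covMatrix p - covMatrix q) ^ 2 /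
        (72 * max (∫ x, p x * ‖x‖ ^ 4) (∫ x, q x * ‖x‖ ^ 4)) ≤
      ∫ x, |p x - q x| := by
  have hd0 : ∀ x : EuclideanSpace ℝ (Fin n), (0:ℝ) ≤ |p x - q x| := fun x => abs_nonneg _
  have hd_i : Integrable (fun x : EuclideanSpace ℝ (Fin n) => |p x - q x|) := (hpi.sub hqi).abs
  set L : ℝ := ∫ x, |p x - q x| with hL_def
  have hL0 : 0 ≤ L := integral_nonneg hd0
  set M4 : ℝ := max (∫ x, p x * ‖x‖ ^ 4) (∫ x, q x * ‖x‖ ^ 4) with hM4_def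
  have hM4 : 0 < M4 := hpos
  have hdpq : ∀ x, |p x - q x| ≤ p x + q x := fun x =>
    abs_le.mpr ⟨by have := hp0 x; have := hq0 x; linarith,
                by have := hp0 x; have := hq0 x; linarith⟩
  -- norms squared as coordinate sums
  have hnormsq : ∀ x : EuclideanSpace ℝ (Fin n), ‖x‖ ^ 2 = ∑ i, x i * x i := by
    intro x
    rw [EuclideanSpace.norm_eq, Real.sq_sqrt (by positivity)]
    exact Finset.sum_congr rfl fun i _ => by rw [Real.norm_eq_abs, sq_abs, sq]
  have hP2 : Integrable (fun x : EuclideanSpace ℝ (Fin n) => p x * ‖x‖ ^ 2) := by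
    have : (fun x : EuclideanSpace ℝ (Fin n) => p x * ‖x‖ ^ 2)
        = fun x => ∑ i, p x * (x i * x i) := funext fun x => by
      rw [hnormsq, Finset.mul_sum]
    rw [this]
    exact integrable_finset_sum _ fun i _ => hpij i i
  have hQ2 : Integrable (fun x : EuclideanSpace ℝ (Fin n) => q x * ‖x‖ ^ 2) := by
    have : (fun x : EuclideanSpace ℝ (Fin n) => q x * ‖x‖ ^ 2)
        = fun x => ∑ i, q x * (x i * x i) := funext fun x => by
      rw [hnormsq, Finset.mul_sum]
    rw [this]
    exact integrable_finset_sum _ fun i _ => hqij i i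
  -- second moments are bounded by sqrt M4
  have moment2 : ∀ f : EuclideanSpace ℝ (Fin n) → ℝ, (∀ x, 0 ≤ f x) → Integrable f →
      (∫ x, f x) = 1 → Integrable (fun x => f x * ‖x‖ ^ 2) →
      Integrable (fun x => f x * ‖x‖ ^ 4) → (∫ x, f x * ‖x‖ ^ 4) ≤ M4 →
      (∫ x, f x * ‖x‖ ^ 2) ≤ Real.sqrt M4 := by
    intro f hf0 hfi hf1 hf2 hf4 hfle
    have hfg2 : Integrable (fun x => f x * (‖x‖ ^ 2) ^ 2) := by
      apply hf4.congr
      filter_upwards with x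
      ring
    have key := cs_int hf0 hfi
      ((continuous_norm.pow 2).aestronglyMeasurable :
        AEStronglyMeasurable (fun x : EuclideanSpace ℝ (Fin n) => ‖x‖ ^ 2)) hfg2
    have e1 : (∫ x, f x * |‖x‖ ^ 2|) = ∫ x, f x * ‖x‖ ^ 2 := by
      apply integral_congr_ae; filter_upwards with x
      rw [abs_of_nonneg (by positivity)]
    have e2 : (∫ x, f x * (‖x‖ ^ 2) ^ 2) = ∫ x, f x * ‖x‖ ^ 4 := by
      apply integral_congr_ae; filter_upwards with x; ring
    rw [e1, e2, hf1, Real.sqrt_one, one_mul] at key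
    exact key.trans (Real.sqrt_le_sqrt hfle)
  have hM2p : (∫ x, p x * ‖x‖ ^ 2) ≤ Real.sqrt M4 :=
    moment2 p hp0 hpi hp1 hP2 hp4 (le_max_left _ _)
  have hM2q : (∫ x, q x * ‖x‖ ^ 2) ≤ Real.sqrt M4 :=
    moment2 q hq0 hqi hq1 hQ2 hq4 (le_max_right _ _)
  -- means are bounded
  have meanbound : ∀ f : EuclideanSpace ℝ (Fin n) → ℝ, (∀ x, 0 ≤ f x) → Integrable f →
      (∫ x, f x) = 1 → Integrable (fun x => f x • x) →
      Integrable (fun x => f x * ‖x‖ ^ 2) → (∫ x, f x * ‖x‖ ^ 2) ≤ Real.sqrt M4 →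
      ‖∫ x, f x • x‖ ≤ Real.sqrt (Real.sqrt M4) := by
    intro f hf0 hfi hf1 hfm hf2 hf2le
    calc ‖∫ x, f x • x‖ ≤ ∫ x, ‖f x • x‖ := norm_integral_le_integral_norm _
      _ = ∫ x, f x * |‖x‖| := by
          apply integral_congr_ae; filter_upwards with x
          rw [norm_smul, Real.norm_eq_abs, abs_of_nonneg (hf0 x),
            abs_of_nonneg (norm_nonneg x)]
      _ ≤ Real.sqrt (∫ x, f x) * Real.sqrt (∫ x, f x * ‖x‖ ^ 2) := by
          have hfg2 : Integrable (fun x => f x * ‖x‖ ^ 2) := hf2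
          exact cs_int hf0 hfi continuous_norm.aestronglyMeasurable hfg2
      _ ≤ Real.sqrt (Real.sqrt M4) := by
          rw [hf1, Real.sqrt_one, one_mul]
          exact Real.sqrt_le_sqrt hf2le
  have hmp : ‖∫ x, p x • x‖ ≤ Real.sqrt (Real.sqrt M4) :=
    meanbound p hp0 hpi hp1 hpm hP2 hM2p
  have hmq : ‖∫ x, q x • x‖ ≤ Real.sqrt (Real.sqrt M4) :=
    meanbound q hq0 hqi hq1 hqm hQ2 hM2q
  -- core Cauchy-Schwarz estimate for differences
  have core : ∀ g : EuclideanSpace ℝ (Fin n) → ℝ, Continuous g →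
      Integrable (fun x => p x * g x) → Integrable (fun x => q x * g x) →
      Integrable (fun x => |p x - q x| * g x ^ 2) →
      ∀ B : ℝ, (∫ x, |p x - q x| * g x ^ 2) ≤ B →
      |(∫ x, p x * g x) - ∫ x, q x * g x| ≤ Real.sqrt L * Real.sqrt B := by
    intro g hg hpg hqg hdg2 B hB
    have hsub : (∫ x, p x * g x) - ∫ x, q x * g x = ∫ x, (p x - q x) * g x := by
      rw [← integral_sub hpg hqg]
      apply integral_congr_ae; filter_upwards with x; ring
    rw [hsub]
    calc |∫ x, (p x - q x) * g x| = ‖∫ x, (p x - q x) * g x‖ := (Real.norm_eq_abs _).symm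
      _ ≤ ∫ x, ‖(p x - q x) * g x‖ := norm_integral_le_integral_norm _
      _ = ∫ x, |p x - q x| * |g x| := by
          apply integral_congr_ae; filter_upwards with x
          rw [Real.norm_eq_abs, abs_mul]
      _ ≤ Real.sqrt (∫ x, |p x - q x|) * Real.sqrt (∫ x, |p x - q x| * g x ^ 2) :=
          cs_int hd0 hd_i hg.aestronglyMeasurable hdg2
      _ ≤ Real.sqrt L * Real.sqrt B := by
          apply mul_le_mul_of_nonneg_left (Real.sqrt_le_sqrt hB) (Real.sqrt_nonneg _)
  -- mean difference bound
  have meandiff : ∀ u : EuclideanSpace ℝ (Fin n),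
      |(inner ℝ u (∫ x, p x • x) : ℝ) - (inner ℝ u (∫ x, q x • x) : ℝ)|
        ≤ ‖u‖ * (Real.sqrt L * Real.sqrt (2 * Real.sqrt M4)) := by
    intro u
    have hpg : Integrable (fun x => p x * (inner ℝ u x : ℝ)) := by
      have := (innerSL ℝ u).integrable_comp hpm
      apply this.congr
      filter_upwards with x
      simp [real_inner_smul_right]
    have hqg : Integrable (fun x => q x * (inner ℝ u x : ℝ)) := by
      have := (innerSL ℝ u).integrable_comp hqm
      apply this.congr
      filter_upwards with x
      simp [real_inner_smul_right]
    have hip : (inner ℝ u (∫ x, p x • x) : ℝ) = ∫ x, p x * (inner ℝ u x : ℝ) := by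
      rw [← integral_inner hpm u]
      apply integral_congr_ae; filter_upwards with x
      rw [real_inner_smul_right]
    have hiq : (inner ℝ u (∫ x, q x • x) : ℝ) = ∫ x, q x * (inner ℝ u x : ℝ) := by
      rw [← integral_inner hqm u]
      apply integral_congr_ae; filter_upwards with x
      rw [real_inner_smul_right]
    have hgcont : Continuous fun x : EuclideanSpace ℝ (Fin n) => (inner ℝ u x : ℝ) :=
      continuous_const.inner continuous_id
    have hptw : ∀ x : EuclideanSpace ℝ (Fin n),
        |p x - q x| * (inner ℝ u x : ℝ) ^ 2 ≤ ‖u‖ ^ 2 * ((p x + q x) * ‖x‖ ^ 2) := by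
      intro x
      have h1 : (inner ℝ u x : ℝ) ^ 2 ≤ (‖u‖ * ‖x‖) ^ 2 := by
        rw [← sq_abs]
        exact pow_le_pow_left₀ (abs_nonneg _) (abs_real_inner_le_norm u x) 2
      have h2 := hdpq x
      have h3 : (0:ℝ) ≤ (inner ℝ u x : ℝ) ^ 2 := sq_nonneg _
      have h4 : (0:ℝ) ≤ p x + q x := by have := hp0 x; have := hq0 x; linarith
      calc |p x - q x| * (inner ℝ u x : ℝ) ^ 2 ≤ (p x + q x) * ((‖u‖ * ‖x‖) ^ 2) :=
            mul_le_mul h2 h1 h3 h4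
        _ = ‖u‖ ^ 2 * ((p x + q x) * ‖x‖ ^ 2) := by ring
    have hbnd_i : Integrable (fun x : EuclideanSpace ℝ (Fin n) =>
        ‖u‖ ^ 2 * ((p x + q x) * ‖x‖ ^ 2)) := by
      have : Integrable (fun x : EuclideanSpace ℝ (Fin n) =>
          p x * ‖x‖ ^ 2 + q x * ‖x‖ ^ 2) := hP2.add hQ2
      apply (this.const_mul (‖u‖ ^ 2)).congr
      filter_upwards with x; ring
    have hdg2 : Integrable (fun x => |p x - q x| * (inner ℝ u x : ℝ) ^ 2) := by
      apply Integrable.mono' hbnd_i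
      · exact (hpi.sub hqi).abs.aestronglyMeasurable.mul
          ((hgcont.pow 2).aestronglyMeasurable)
      · filter_upwards with x
        rw [Real.norm_eq_abs, abs_of_nonneg (mul_nonneg (abs_nonneg _) (sq_nonneg _))]
        exact hptw x
    have hBint : (∫ x, |p x - q x| * (inner ℝ u x : ℝ) ^ 2)
        ≤ ‖u‖ ^ 2 * (2 * Real.sqrt M4) := by
      calc (∫ x, |p x - q x| * (inner ℝ u x : ℝ) ^ 2)
          ≤ ∫ x, ‖u‖ ^ 2 * ((p x + q x) * ‖x‖ ^ 2) :=
            integral_mono hdg2 hbnd_i hptw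
        _ = ‖u‖ ^ 2 * ((∫ x, p x * ‖x‖ ^ 2) + ∫ x, q x * ‖x‖ ^ 2) := by
            rw [integral_const_mul]
            congr 1
            rw [← integral_add hP2 hQ2]
            apply integral_congr_ae; filter_upwards with x; ring
        _ ≤ ‖u‖ ^ 2 * (2 * Real.sqrt M4) := by
            apply mul_le_mul_of_nonneg_left _ (sq_nonneg _)
            linarith
    have := core (fun x => (inner ℝ u x : ℝ)) hgcont hpg hqg hdg2
      (‖u‖ ^ 2 * (2 * Real.sqrt M4)) hBint
    rw [hip, hiq]
    calc |(∫ x, p x * (inner ℝ u x : ℝ)) - ∫ x, q x * (inner ℝ u x : ℝ)|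
        ≤ Real.sqrt L * Real.sqrt (‖u‖ ^ 2 * (2 * Real.sqrt M4)) := this
      _ = ‖u‖ * (Real.sqrt L * Real.sqrt (2 * Real.sqrt M4)) := by
          rw [Real.sqrt_mul (sq_nonneg _), Real.sqrt_sq (norm_nonneg u)]
          ring
  -- the quadratic form bound
  set C : ℝ := 3 * (Real.sqrt L * Real.sqrt (2 * M4)) with hC_def
  have hC0 : 0 ≤ C := by positivity
  have hquad : ∀ w v : EuclideanSpace ℝ (Fin n),
      |∑ i, ∑ j, w i * ((covMatrix p - covMatrix q) i j * v j)| ≤ C * ‖w‖ * ‖v‖ := by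
    intro w v
    have hsplit : ∑ i, ∑ j, w i * ((covMatrix p - covMatrix q) i j * v j)
        = (∑ i, ∑ j, w i * (covMatrix p i j * v j))
          - ∑ i, ∑ j, w i * (covMatrix q i j * v j) := by
      rw [← Finset.sum_sub_distrib]
      apply Finset.sum_congr rfl; intro i _
      rw [← Finset.sum_sub_distrib]
      apply Finset.sum_congr rfl; intro j _
      rw [Matrix.sub_apply]
      ring
    rw [hsplit, quadform_eq p hpij w v, quadform_eq q hqij w v]
    set mp : EuclideanSpace ℝ (Fin n) := ∫ x, p x • x with hmp_def
    set mq : EuclideanSpace ℝ (Fin n) := ∫ x, q x • x with hmq_def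
    set g : EuclideanSpace ℝ (Fin n) → ℝ := fun x => (inner ℝ w x : ℝ) * (inner ℝ v x : ℝ)
      with hg_def
    have hgcont : Continuous g :=
      (continuous_const.inner continuous_id).mul (continuous_const.inner continuous_id)
    -- integrability of p * g and q * g
    have hpg : Integrable (fun x => p x * g x) := by
      apply Integrable.mono' (hP2.const_mul (‖w‖ * ‖v‖))
      · exact hpi.aestronglyMeasurable.mul hgcont.aestronglyMeasurable
      · filter_upwards with x
        have h1 := abs_real_inner_le_norm w x
        have h2 := abs_real_inner_le_norm v x
        rw [Real.norm_eq_abs, abs_mul, abs_of_nonneg (hp0 x), hg_def]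
        calc p x * |(inner ℝ w x : ℝ) * (inner ℝ v x : ℝ)|
            ≤ p x * ((‖w‖ * ‖x‖) * (‖v‖ * ‖x‖)) := by
              apply mul_le_mul_of_nonneg_left _ (hp0 x)
              rw [abs_mul]
              exact mul_le_mul h1 h2 (abs_nonneg _) (by positivity)
          _ = ‖w‖ * ‖v‖ * (p x * ‖x‖ ^ 2) := by ring
    have hqg : Integrable (fun x => q x * g x) := by
      apply Integrable.mono' (hQ2.const_mul (‖w‖ * ‖v‖))
      · exact hqi.aestronglyMeasurable.mul hgcont.aestronglyMeasurable
      · filter_upwards with x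
        have h1 := abs_real_inner_le_norm w x
        have h2 := abs_real_inner_le_norm v x
        rw [Real.norm_eq_abs, abs_mul, abs_of_nonneg (hq0 x), hg_def]
        calc q x * |(inner ℝ w x : ℝ) * (inner ℝ v x : ℝ)|
            ≤ q x * ((‖w‖ * ‖x‖) * (‖v‖ * ‖x‖)) := by
              apply mul_le_mul_of_nonneg_left _ (hq0 x)
              rw [abs_mul]
              exact mul_le_mul h1 h2 (abs_nonneg _) (by positivity)
          _ = ‖w‖ * ‖v‖ * (q x * ‖x‖ ^ 2) := by ring
    -- pointwise bound on |p-q| * g^2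
    have hptw : ∀ x : EuclideanSpace ℝ (Fin n),
        |p x - q x| * g x ^ 2 ≤ (‖w‖ * ‖v‖) ^ 2 * ((p x + q x) * ‖x‖ ^ 4) := by
      intro x
      have h1 : (inner ℝ w x : ℝ) ^ 2 ≤ (‖w‖ * ‖x‖) ^ 2 := by
        rw [← sq_abs]
        exact pow_le_pow_left₀ (abs_nonneg _) (abs_real_inner_le_norm w x) 2
      have h2 : (inner ℝ v x : ℝ) ^ 2 ≤ (‖v‖ * ‖x‖) ^ 2 := by
        rw [← sq_abs]
        exact pow_le_pow_left₀ (abs_nonneg _) (abs_real_inner_le_norm v x) 2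
      have h4 : (0:ℝ) ≤ p x + q x := by have := hp0 x; have := hq0 x; linarith
      have hgsq : g x ^ 2 ≤ (‖w‖ * ‖v‖) ^ 2 * ‖x‖ ^ 4 := by
        rw [hg_def]
        calc ((inner ℝ w x : ℝ) * (inner ℝ v x : ℝ)) ^ 2
            = (inner ℝ w x : ℝ) ^ 2 * (inner ℝ v x : ℝ) ^ 2 := by ring
          _ ≤ (‖w‖ * ‖x‖) ^ 2 * (‖v‖ * ‖x‖) ^ 2 :=
              mul_le_mul h1 h2 (sq_nonneg _) (sq_nonneg _)
          _ = (‖w‖ * ‖v‖) ^ 2 * ‖x‖ ^ 4 := by ring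
      calc |p x - q x| * g x ^ 2 ≤ (p x + q x) * ((‖w‖ * ‖v‖) ^ 2 * ‖x‖ ^ 4) :=
            mul_le_mul (hdpq x) hgsq (sq_nonneg _) h4
        _ = (‖w‖ * ‖v‖) ^ 2 * ((p x + q x) * ‖x‖ ^ 4) := by ring
    have hbnd_i : Integrable (fun x : EuclideanSpace ℝ (Fin n) =>
        (‖w‖ * ‖v‖) ^ 2 * ((p x + q x) * ‖x‖ ^ 4)) := by
      have : Integrable (fun x : EuclideanSpace ℝ (Fin n) =>
          p x * ‖x‖ ^ 4 + q x * ‖x‖ ^ 4) := hp4.add hq4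
      apply (this.const_mul ((‖w‖ * ‖v‖) ^ 2)).congr
      filter_upwards with x; ring
    have hdg2 : Integrable (fun x => |p x - q x| * g x ^ 2) := by
      apply Integrable.mono' hbnd_i
      · exact (hpi.sub hqi).abs.aestronglyMeasurable.mul
          ((hgcont.pow 2).aestronglyMeasurable)
      · filter_upwards with x
        rw [Real.norm_eq_abs, abs_of_nonneg (mul_nonneg (abs_nonneg _) (sq_nonneg _))]
        exact hptw x
    have hBint : (∫ x, |p x - q x| * g x ^ 2) ≤ (‖w‖ * ‖v‖) ^ 2 * (2 * M4) := by
      calc (∫ x, |p x - q x| * g x ^ 2)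
          ≤ ∫ x, (‖w‖ * ‖v‖) ^ 2 * ((p x + q x) * ‖x‖ ^ 4) :=
            integral_mono hdg2 hbnd_i hptw
        _ = (‖w‖ * ‖v‖) ^ 2 * ((∫ x, p x * ‖x‖ ^ 4) + ∫ x, q x * ‖x‖ ^ 4) := by
            rw [integral_const_mul]
            congr 1
            rw [← integral_add hp4 hq4]
            apply integral_congr_ae; filter_upwards with x; ring
        _ ≤ (‖w‖ * ‖v‖) ^ 2 * (2 * M4) := by
            apply mul_le_mul_of_nonneg_left _ (sq_nonneg _)
            have := le_max_left (∫ x, p x * ‖x‖ ^ 4) (∫ x, q x * ‖x‖ ^ 4)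
            have := le_max_right (∫ x, p x * ‖x‖ ^ 4) (∫ x, q x * ‖x‖ ^ 4)
            rw [hM4_def]
            linarith
    -- bound on the second-moment difference term
    have hT1 : |(∫ x, p x * g x) - ∫ x, q x * g x|
        ≤ Real.sqrt L * Real.sqrt (2 * M4) * (‖w‖ * ‖v‖) := by
      have := core g hgcont hpg hqg hdg2 ((‖w‖ * ‖v‖) ^ 2 * (2 * M4)) hBint
      calc |(∫ x, p x * g x) - ∫ x, q x * g x|
          ≤ Real.sqrt L * Real.sqrt ((‖w‖ * ‖v‖) ^ 2 * (2 * M4)) := this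
        _ = Real.sqrt L * Real.sqrt (2 * M4) * (‖w‖ * ‖v‖) := by
            rw [Real.sqrt_mul (sq_nonneg _), Real.sqrt_sq (by positivity)]
            ring
    -- bound on the mean term
    have sroot : Real.sqrt (2 * Real.sqrt M4) * Real.sqrt (Real.sqrt M4)
        = Real.sqrt (2 * M4) := by
      rw [← Real.sqrt_mul (by positivity), mul_assoc,
        Real.mul_self_sqrt hM4.le]
    have hT2 : |(inner ℝ w mp : ℝ) * (inner ℝ v mp : ℝ) - (inner ℝ w mq : ℝ) * (inner ℝ v mq : ℝ)|
        ≤ 2 * (Real.sqrt L * Real.sqrt (2 * M4)) * (‖w‖ * ‖v‖) := by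
      have e : (inner ℝ w mp : ℝ) * (inner ℝ v mp : ℝ) - (inner ℝ w mq : ℝ) * (inner ℝ v mq : ℝ)
          = ((inner ℝ w mp : ℝ) - (inner ℝ w mq : ℝ)) * (inner ℝ v mp : ℝ)
            + (inner ℝ w mq : ℝ) * ((inner ℝ v mp : ℝ) - (inner ℝ v mq : ℝ)) := by ring
      have hdw := meandiff w
      have hdv := meandiff v
      have hbp : |(inner ℝ v mp : ℝ)| ≤ ‖v‖ * Real.sqrt (Real.sqrt M4) :=
        (abs_real_inner_le_norm v mp).trans
          (mul_le_mul_of_nonneg_left hmp (norm_nonneg v))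
      have hbq : |(inner ℝ w mq : ℝ)| ≤ ‖w‖ * Real.sqrt (Real.sqrt M4) :=
        (abs_real_inner_le_norm w mq).trans
          (mul_le_mul_of_nonneg_left hmq (norm_nonneg w))
      calc |(inner ℝ w mp : ℝ) * (inner ℝ v mp : ℝ) - (inner ℝ w mq : ℝ) * (inner ℝ v mq : ℝ)|
          = |((inner ℝ w mp : ℝ) - (inner ℝ w mq : ℝ)) * (inner ℝ v mp : ℝ)
              + (inner ℝ w mq : ℝ) * ((inner ℝ v mp : ℝ) - (inner ℝ v mq : ℝ))| := by rw [e]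
        _ ≤ |((inner ℝ w mp : ℝ) - (inner ℝ w mq : ℝ)) * (inner ℝ v mp : ℝ)|
              + |(inner ℝ w mq : ℝ) * ((inner ℝ v mp : ℝ) - (inner ℝ v mq : ℝ))| := abs_add_le _ _
        _ = |(inner ℝ w mp : ℝ) - (inner ℝ w mq : ℝ)| * |(inner ℝ v mp : ℝ)|
              + |(inner ℝ w mq : ℝ)| * |(inner ℝ v mp : ℝ) - (inner ℝ v mq : ℝ)| := by
            rw [abs_mul, abs_mul]
        _ ≤ (‖w‖ * (Real.sqrt L * Real.sqrt (2 * Real.sqrt M4)))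
              * (‖v‖ * Real.sqrt (Real.sqrt M4))
              + (‖w‖ * Real.sqrt (Real.sqrt M4))
              * (‖v‖ * (Real.sqrt L * Real.sqrt (2 * Real.sqrt M4))) := by
            apply add_le_add
            · exact mul_le_mul hdw hbp (abs_nonneg _) (by positivity)
            · exact mul_le_mul hbq hdv (abs_nonneg _) (by positivity)
        _ = 2 * (Real.sqrt L * (Real.sqrt (2 * Real.sqrt M4) * Real.sqrt (Real.sqrt M4)))
              * (‖w‖ * ‖v‖) := by ring
        _ = 2 * (Real.sqrt L * Real.sqrt (2 * M4)) * (‖w‖ * ‖v‖) := by rw [sroot]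
    calc |((∫ x, p x * g x) - (inner ℝ w mp : ℝ) * (inner ℝ v mp : ℝ))
          - ((∫ x, q x * g x) - (inner ℝ w mq : ℝ) * (inner ℝ v mq : ℝ))|
        = |((∫ x, p x * g x) - ∫ x, q x * g x)
            - ((inner ℝ w mp : ℝ) * (inner ℝ v mp : ℝ)
              - (inner ℝ w mq : ℝ) * (inner ℝ v mq : ℝ))| := by congr 1; ring
      _ ≤ |(∫ x, p x * g x) - ∫ x, q x * g x|
            + |(inner ℝ w mp : ℝ) * (inner ℝ v mp : ℝ)
              - (inner ℝ w mq : ℝ) * (inner ℝ v mq : ℝ)| := abs_sub _ _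
      _ ≤ Real.sqrt L * Real.sqrt (2 * M4) * (‖w‖ * ‖v‖)
            + 2 * (Real.sqrt L * Real.sqrt (2 * M4)) * (‖w‖ * ‖v‖) := add_le_add hT1 hT2
      _ = C * ‖w‖ * ‖v‖ := by rw [hC_def]; ring
  have hop : matrixOpNorm (covMatrix p - covMatrix q) ≤ C :=
    opNorm_le_of_quadform _ hC0 hquad
  have hopsq : matrixOpNorm (covMatrix p - covMatrix q) ^ 2 ≤ C ^ 2 := by
    have h0 : 0 ≤ matrixOpNorm (covMatrix p - covMatrix q) := norm_nonneg _
    exact pow_le_pow_left₀ h0 hop 2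
  have hCsq : C ^ 2 = 18 * (M4 * L) := by
    rw [hC_def, mul_pow, mul_pow, Real.sq_sqrt hL0, Real.sq_sqrt (by positivity : (0:ℝ) ≤ 2 * M4)]
    ring
  rw [div_le_iff₀ (by positivity : (0:ℝ) < 72 * M4)]
  rw [hCsq] at hopsq
  nlinarith [mul_nonneg hM4.le hL0]
end

section
/- Define f : ℕ → ℝ by f(0) = 3 + 6√2 + 2√6, f(1) = (21 + 14√6 + 2√30)/(4·(3/2)²), f(2) = (6√2 + 39 + 28√3 + 6√10)/(4·(5/2)²), and for n ≥ 3, f(n) = [√(n(n−1)(n−2)(n−3)) + (4n−2)√(n(n−1)) + 3(n+1)² + (4n+6)√((n+1)(n+2)) + 3n² + √((n+1)(n+2)(n+3)(n+4))] / (4(n+1/2)²). Then sup_{n ∈ ℕ} f(n) = f(0) = 3 + 6√2 + 2√6. -/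
/-! Every value `f n` with `n ≥ 1` is at most `8`: bound each square root by an integer
(for `n ≥ 3`, by a polynomial in `n` obtained by dropping or enlarging factors). On the other
hand `f 0 = 3 + 6√2 + 2√6 ≥ 3 + 6 · 1.4 + 2 · 2.4 > 16`. -/

open Real

/-- `f n = (n+1/2)⁻² ∑_j |⟨j| x̂⁴ |n⟩|`, the normalized row sums of absolute values
of the matrix elements of `x̂⁴` in the Fock basis. -/
noncomputable def fockRowSum (n : ℕ) : ℝ :=
  if n = 0 then 3 + 6 * Real.sqrt 2 + 2 * Real.sqrt 6
  else if n = 1 then (21 + 14 * Real.sqrt 6 + 2 * Real.sqrt 30) / (4 * (3 / 2 : ℝ) ^ 2)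
  else if n = 2 then
    (6 * Real.sqrt 2 + 39 + 28 * Real.sqrt 3 + 6 * Real.sqrt 10) / (4 * (5 / 2 : ℝ) ^ 2)
  else
    (Real.sqrt ((n : ℝ) * ((n : ℝ) - 1) * ((n : ℝ) - 2) * ((n : ℝ) - 3))
        + (4 * (n : ℝ) - 2) * Real.sqrt ((n : ℝ) * ((n : ℝ) - 1))
        + 3 * ((n : ℝ) + 1) ^ 2
        + (4 * (n : ℝ) + 6) * Real.sqrt (((n : ℝ) + 1) * ((n : ℝ) + 2))
        + 3 * (n : ℝ) ^ 2
        + Real.sqrt (((n : ℝ) + 1) * ((n : ℝ) + 2) * ((n : ℝ) + 3) * ((n : ℝ) + 4)))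
      / (4 * ((n : ℝ) + 1 / 2) ^ 2)

lemma fockRowSum_zero : fockRowSum 0 = 3 + 6 * √2 + 2 * √6 := by
  simp [fockRowSum]

lemma sixteen_le_fockRowSum_zero : 16 ≤ fockRowSum 0 := by
  have h2 : (1.4 : ℝ) ≤ √2 := (le_sqrt' (by norm_num)).2 (by norm_num)
  have h6 : (2.4 : ℝ) ≤ √6 := (le_sqrt' (by norm_num)).2 (by norm_num)
  rw [fockRowSum_zero]
  linarith

lemma fockRowSum_one_le : fockRowSum 1 ≤ 8 := by
  have h6 : √6 ≤ 5 / 2 := (sqrt_le_left (by norm_num)).2 (by norm_num)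
  have h30 : √30 ≤ 11 / 2 := (sqrt_le_left (by norm_num)).2 (by norm_num)
  rw [fockRowSum, if_neg one_ne_zero, if_pos rfl, div_le_iff₀ (by norm_num)]
  linarith

lemma fockRowSum_two_le : fockRowSum 2 ≤ 8 := by
  have h2 : √2 ≤ 3 / 2 := (sqrt_le_left (by norm_num)).2 (by norm_num)
  have h3 : √3 ≤ 2 := (sqrt_le_left (by norm_num)).2 (by norm_num)
  have h10 : √10 ≤ 4 := (sqrt_le_left (by norm_num)).2 (by norm_num)
  rw [fockRowSum, if_neg two_ne_zero, if_neg (by norm_num), if_pos rfl,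
    div_le_iff₀ (by norm_num)]
  linarith

lemma fockRowSum_le_of_three_le {n : ℕ} (hn : 3 ≤ n) : fockRowSum n ≤ 8 := by
  rw [fockRowSum, if_neg (by omega), if_neg (by omega), if_neg (by omega),
    div_le_iff₀ (by positivity)]
  have hx : (3 : ℝ) ≤ n := by exact_mod_cast hn
  set x : ℝ := (n : ℝ)
  have h1 : √(x * (x - 1) * (x - 2) * (x - 3)) ≤ x ^ 2 :=
    (sqrt_le_left (by positivity)).2 (by nlinarith [mul_nonneg (sub_nonneg.2 hx) (sq_nonneg x)])
  have h2 : √(x * (x - 1)) ≤ x := (sqrt_le_left (by positivity)).2 (by nlinarith)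
  have h3 : √((x + 1) * (x + 2)) ≤ x + 2 := (sqrt_le_left (by positivity)).2 (by nlinarith)
  have h4 : √((x + 1) * (x + 2) * (x + 3) * (x + 4)) ≤ (x + 4) ^ 2 :=
    (sqrt_le_left (by positivity)).2 (by nlinarith)
  nlinarith [mul_le_mul_of_nonneg_left h2 (by linarith : (0 : ℝ) ≤ 4 * x - 2),
    mul_le_mul_of_nonneg_left h3 (by linarith : (0 : ℝ) ≤ 4 * x + 6)]

lemma fockRowSum_le_of_ne_zero {n : ℕ} (hn : n ≠ 0) : fockRowSum n ≤ 8 := by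
  match n, hn with
  | 1, _ => exact fockRowSum_one_le
  | 2, _ => exact fockRowSum_two_le
  | m + 3, _ => exact fockRowSum_le_of_three_le (by omega)

lemma fockRowSum_le_fockRowSum_zero (n : ℕ) : fockRowSum n ≤ fockRowSum 0 := by
  rcases eq_or_ne n 0 with rfl | hn
  · rfl
  · linarith [fockRowSum_le_of_ne_zero hn, sixteen_le_fockRowSum_zero]

/-- The supremum of `f` over ℕ is attained at `n = 0` and equals `3 + 6√2 + 2√6`. -/
theorem fockRowSum_iSup : (⨆ n, fockRowSum n) = 3 + 6 * Real.sqrt 2 + 2 * Real.sqrt 6 := by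
  rw [← fockRowSum_zero]
  exact le_antisymm (ciSup_le fockRowSum_le_fockRowSum_zero)
    (le_ciSup ⟨_, Set.forall_mem_range.2 fockRowSum_le_fockRowSum_zero⟩ 0)
end

section
/- With the symplectic rank 𝔰 and stellar rank r⋆ as non-Gaussianity monotones satisfying 𝔰(|2⟩) = 1, r⋆(|2⟩) = 2, 𝔰(|1⟩⊗|1⟩) = 2, r⋆(|1⟩⊗|1⟩) = 2, and additivity under tensor powers, the abstract rate bounds imply Distill(|2⟩ → |1⟩^⊗2) ≤ 1/2 while Cost(|1⟩^⊗2 → |2⟩) ≥ 1; hence Distill(|2⟩ → |1⟩^⊗2) < Cost(|1⟩^⊗2 → |2⟩), i.e. the resource theory is irreversible. -/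
/-!
An exact free conversion `ρ^⊗n ↦ σ^⊗m` cannot increase a monotone that is additive on these
tensor powers, so `m · f σ ≤ n · f ρ`. The symplectic rank of `|1⟩⊗|1⟩` is twice that of `|2⟩`,
which caps distillation at rate `1/2`; the stellar ranks of the two states agree, which forces the
cost to be at least `1`.
-/

section RateBounds

variable {States : Type*} (pow : States → ℕ → States) (Free : Set (States → States))

/-- Rates `m / n` of exact free conversions `ρ^⊗n ↦ σ^⊗m`; `Distill(ρ → σ)` is their supremum. -/
def distillRates (ρ σ : States) : Set ℝ :=
  {x | ∃ n m : ℕ, 0 < n ∧ 0 < m ∧ (∃ Λ ∈ Free, Λ (pow ρ n) = pow σ m) ∧ x = (m : ℝ) / n}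

/-- Rates `n / m` of exact free conversions `ρ^⊗n ↦ σ^⊗m`; `Cost(ρ → σ)` is their infimum. -/
def costRates (ρ σ : States) : Set ℝ :=
  {x | ∃ n m : ℕ, 0 < n ∧ 0 < m ∧ (∃ Λ ∈ Free, Λ (pow ρ n) = pow σ m) ∧ x = (n : ℝ) / m}

variable {pow Free} {f : States → ℕ} {ρ σ : States}

theorem mul_le_mul_of_free_conversion (hmono : ∀ Λ ∈ Free, ∀ x, f (Λ x) ≤ f x)
    (hρ : ∀ n, f (pow ρ n) = n * f ρ) (hσ : ∀ n, f (pow σ n) = n * f σ)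
    {n m : ℕ} {Λ : States → States} (hΛ : Λ ∈ Free) (hconv : Λ (pow ρ n) = pow σ m) :
    (m : ℝ) * f σ ≤ n * f ρ := by
  have h := hmono Λ hΛ (pow ρ n)
  rw [hconv, hσ, hρ] at h
  exact_mod_cast h

theorem sSup_distillRates_le (hmono : ∀ Λ ∈ Free, ∀ x, f (Λ x) ≤ f x)
    (hρ : ∀ n, f (pow ρ n) = n * f ρ) (hσ : ∀ n, f (pow σ n) = n * f σ) (hσpos : 0 < f σ) :
    sSup (distillRates pow Free ρ σ) ≤ (f ρ : ℝ) / f σ := by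
  refine Real.sSup_le ?_ (by positivity)
  rintro x ⟨n, m, hn, -, ⟨Λ, hΛ, hconv⟩, rfl⟩
  rw [div_le_div_iff₀ (by positivity) (by exact_mod_cast hσpos), mul_comm (f ρ : ℝ)]
  exact mul_le_mul_of_free_conversion hmono hρ hσ hΛ hconv

theorem le_sInf_costRates (hmono : ∀ Λ ∈ Free, ∀ x, f (Λ x) ≤ f x)
    (hρ : ∀ n, f (pow ρ n) = n * f ρ) (hσ : ∀ n, f (pow σ n) = n * f σ) (hρpos : 0 < f ρ)
    (hne : (costRates pow Free ρ σ).Nonempty) :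
    (f σ : ℝ) / f ρ ≤ sInf (costRates pow Free ρ σ) := by
  refine le_csInf hne ?_
  rintro x ⟨n, m, -, hm, ⟨Λ, hΛ, hconv⟩, rfl⟩
  rw [div_le_div_iff₀ (by exact_mod_cast hρpos) (by positivity), mul_comm]
  exact mul_le_mul_of_free_conversion hmono hρ hσ hΛ hconv

end RateBounds

/-- Irreversibility of the resource theory of non-Gaussianity under exact free
(post-selected Gaussian) operations: with monotones `𝔰` (symplectic rank) and `r⋆`
(stellar rank) taking the values `𝔰(|2⟩)=1, r⋆(|2⟩)=2, 𝔰(|1⟩⊗|1⟩)=2, r⋆(|1⟩⊗|1⟩)=2`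
and additive on tensor powers of these states, the exact distillable rate
`Distill(|2⟩ → |1⟩^⊗2)` is at most `1/2` while the exact cost rate
`Cost(|1⟩^⊗2 → |2⟩)` is at least `1`; in particular they differ. -/
theorem nonGaussianity_irreversible {States : Type*} (pow : States → ℕ → States)
    (Free : Set (States → States)) (s r : States → ℕ)
    (ket2 ket11 : States)
    (hsmono : ∀ Λ ∈ Free, ∀ x, s (Λ x) ≤ s x)
    (hrmono : ∀ Λ ∈ Free, ∀ x, r (Λ x) ≤ r x)
    (hs2 : s ket2 = 1) (hr2 : r ket2 = 2)
    (hs11 : s ket11 = 2) (hr11 : r ket11 = 2)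
    (hsadd2 : ∀ n, s (pow ket2 n) = n * s ket2)
    (hsadd11 : ∀ n, s (pow ket11 n) = n * s ket11)
    (hradd2 : ∀ n, r (pow ket2 n) = n * r ket2)
    (hradd11 : ∀ n, r (pow ket11 n) = n * r ket11)
    (hcostNonempty :
      {x : ℝ | ∃ n m : ℕ, 0 < n ∧ 0 < m ∧
        (∃ Λ ∈ Free, Λ (pow ket11 n) = pow ket2 m) ∧ x = (n : ℝ) / m}.Nonempty) :
    sSup {x : ℝ | ∃ n m : ℕ, 0 < n ∧ 0 < m ∧
        (∃ Λ ∈ Free, Λ (pow ket2 n) = pow ket11 m) ∧ x = (m : ℝ) / n} ≤ 1 / 2 ∧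
    1 ≤ sInf {x : ℝ | ∃ n m : ℕ, 0 < n ∧ 0 < m ∧
        (∃ Λ ∈ Free, Λ (pow ket11 n) = pow ket2 m) ∧ x = (n : ℝ) / m} ∧
    sSup {x : ℝ | ∃ n m : ℕ, 0 < n ∧ 0 < m ∧
        (∃ Λ ∈ Free, Λ (pow ket2 n) = pow ket11 m) ∧ x = (m : ℝ) / n} <
      sInf {x : ℝ | ∃ n m : ℕ, 0 < n ∧ 0 < m ∧
        (∃ Λ ∈ Free, Λ (pow ket11 n) = pow ket2 m) ∧ x = (n : ℝ) / m} := by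
  have hdistill : sSup (distillRates pow Free ket2 ket11) ≤ 1 / 2 := by
    have h := sSup_distillRates_le hsmono hsadd2 hsadd11 (by omega)
    rwa [hs2, hs11, Nat.cast_one, Nat.cast_ofNat] at h
  have hcost : 1 ≤ sInf (costRates pow Free ket11 ket2) := by
    have h := le_sInf_costRates hrmono hradd11 hradd2 (by omega) hcostNonempty
    rwa [hr2, hr11, Nat.cast_ofNat, div_self two_ne_zero] at h
  exact ⟨hdistill, hcost, hdistill.trans_lt ((by norm_num : (1 : ℝ) / 2 < 1).trans_le hcost)⟩
end
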